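/- Let n ≥ 1, let Pₙ be the path graph on vertices Δ = {α₁,…,αₙ}, and let J₀ ⊆ Δ. For any two admissible subsets U, V ∈ Λ*(Pₙ,J₀), the meet U ∧ V in the lattice Λ*(Pₙ,J₀) is described as follows: a vertex α belongs to U ∧ V if and only if α ∈ U ∩ V and the connected component of α in the subgraph of Pₙ induced on U ∩ V is not entirely contained in J₀. -/

import Mathlib

open SimpleGraph Finset

/-- `ReachIn G U a b` : `b` is reachable from `a` within the subgraph of `G`
induced on the vertex set `U`. -/
def ReachIn {n : ℕ} (G : SimpleGraph (Fin n)) (U : Finset (Fin n)) (a b : Fin n) : Prop :=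
  Relation.ReflTransGen (fun x y => G.Adj x y ∧ x ∈ U ∧ y ∈ U) a b

/-- `U` is admissible (with respect to `J₀`) if no connected component of the
subgraph of `G` induced on `U` is entirely contained in `J₀`: every component
contains a vertex outside `J₀`. -/
def Admissible {n : ℕ} (G : SimpleGraph (Fin n)) (J₀ U : Finset (Fin n)) : Prop :=
  ∀ a ∈ U, ∃ b, ReachIn G U a b ∧ b ∉ J₀

/-- A subset `A` is connected if the induced subgraph on `A` is connected. -/
def ConnIn {n : ℕ} (G : SimpleGraph (Fin n)) (A : Finset (Fin n)) : Prop :=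
  ∀ a ∈ A, ∀ b ∈ A, ReachIn G A a b

theorem ReachIn.mono {n : ℕ} {G : SimpleGraph (Fin n)} {U V : Finset (Fin n)} (h : U ⊆ V)
    {a b : Fin n} (hr : ReachIn G U a b) : ReachIn G V a b :=
  Relation.ReflTransGen.mono (r := fun x y => G.Adj x y ∧ x ∈ U ∧ y ∈ U)
    (p := fun x y => G.Adj x y ∧ x ∈ V ∧ y ∈ V)
    (fun x y hxy => ⟨hxy.1, h hxy.2.1, h hxy.2.2⟩) a b hr

theorem admissible_empty {n : ℕ} (G : SimpleGraph (Fin n)) (J₀ : Finset (Fin n)) :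
    Admissible G J₀ ∅ := fun a ha => absurd ha (Finset.notMem_empty a)

theorem admissible_union {n : ℕ} {G : SimpleGraph (Fin n)} {J₀ U V : Finset (Fin n)}
    (hU : Admissible G J₀ U) (hV : Admissible G J₀ V) : Admissible G J₀ (U ∪ V) := by
  intro a ha
  rcases Finset.mem_union.mp ha with h | h
  · obtain ⟨b, hb, hbJ⟩ := hU a h
    exact ⟨b, hb.mono Finset.subset_union_left, hbJ⟩
  · obtain ⟨b, hb, hbJ⟩ := hV a h
    exact ⟨b, hb.mono Finset.subset_union_right, hbJ⟩

/-- `Λ*(G, J₀)` : the poset of admissible subsets, ordered by inclusion. -/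
def CrossSection {n : ℕ} (G : SimpleGraph (Fin n)) (J₀ : Finset (Fin n)) : Type :=
  {U : Finset (Fin n) // Admissible G J₀ U}

namespace CrossSection

variable {n : ℕ} {G : SimpleGraph (Fin n)} {J₀ : Finset (Fin n)}

instance : PartialOrder (CrossSection G J₀) :=
  inferInstanceAs (PartialOrder {U : Finset (Fin n) // Admissible G J₀ U})

instance : DecidableEq (CrossSection G J₀) :=
  inferInstanceAs (DecidableEq {U : Finset (Fin n) // Admissible G J₀ U})

noncomputable instance : Fintype (CrossSection G J₀) :=
  Fintype.ofInjective (Subtype.val : CrossSection G J₀ → Finset (Fin n)) Subtype.val_injective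

open Classical in
/-- The underlying set of the meet of two admissible sets: the largest admissible
subset contained in the intersection. -/
noncomputable def meetFinset (G : SimpleGraph (Fin n)) (J₀ : Finset (Fin n))
    (U V : Finset (Fin n)) : Finset (Fin n) :=
  ((U ∩ V).powerset.filter (fun W => Admissible G J₀ W)).sup id

theorem admissible_sup {s : Finset (Finset (Fin n))}
    (h : ∀ W ∈ s, Admissible G J₀ W) : Admissible G J₀ (s.sup id) :=
  Finset.sup_induction (by simpa using admissible_empty G J₀)
    (fun a ha b hb => by simpa using admissible_union ha hb) h

theorem admissible_meetFinset (G : SimpleGraph (Fin n)) (J₀ U V : Finset (Fin n)) :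
    Admissible G J₀ (meetFinset G J₀ U V) := by
  classical
  exact admissible_sup (fun W hW => (Finset.mem_filter.mp hW).2)

theorem meetFinset_subset_left (G : SimpleGraph (Fin n)) (J₀ U V : Finset (Fin n)) :
    meetFinset G J₀ U V ≤ U := by
  classical
  unfold meetFinset
  refine Finset.sup_le (fun W hW => ?_)
  have := Finset.mem_powerset.mp (Finset.mem_filter.mp hW).1
  exact fun x hx => (Finset.mem_inter.mp (this hx)).1

theorem meetFinset_subset_right (G : SimpleGraph (Fin n)) (J₀ U V : Finset (Fin n)) :
    meetFinset G J₀ U V ≤ V := by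
  classical
  unfold meetFinset
  refine Finset.sup_le (fun W hW => ?_)
  have := Finset.mem_powerset.mp (Finset.mem_filter.mp hW).1
  exact fun x hx => (Finset.mem_inter.mp (this hx)).2

theorem subset_meetFinset {G : SimpleGraph (Fin n)} {J₀ U V W : Finset (Fin n)}
    (hW : Admissible G J₀ W) (h1 : W ⊆ U) (h2 : W ⊆ V) : W ≤ meetFinset G J₀ U V := by
  classical
  unfold meetFinset
  exact Finset.le_sup (f := id)
    (Finset.mem_filter.mpr ⟨Finset.mem_powerset.mpr (Finset.subset_inter h1 h2), hW⟩)

noncomputable instance : Lattice (CrossSection G J₀) :=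
  { (inferInstance : PartialOrder (CrossSection G J₀)) with
    sup := fun U V => ⟨U.1 ∪ V.1, admissible_union U.2 V.2⟩
    le_sup_left := fun U V => show U.1 ⊆ U.1 ∪ V.1 from Finset.subset_union_left
    le_sup_right := fun U V => show V.1 ⊆ U.1 ∪ V.1 from Finset.subset_union_right
    sup_le := fun U V W h1 h2 => show U.1 ∪ V.1 ⊆ W.1 from Finset.union_subset h1 h2
    inf := fun U V => ⟨meetFinset G J₀ U.1 V.1, admissible_meetFinset G J₀ U.1 V.1⟩
    inf_le_left := fun U V => meetFinset_subset_left G J₀ U.1 V.1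
    inf_le_right := fun U V => meetFinset_subset_right G J₀ U.1 V.1
    le_inf := fun W U V h1 h2 => subset_meetFinset W.2 h1 h2 }

instance : OrderBot (CrossSection G J₀) where
  bot := ⟨∅, admissible_empty G J₀⟩
  bot_le := fun U => show (∅ : Finset (Fin n)) ⊆ U.1 from Finset.empty_subset _

@[simp] theorem sup_val (U V : CrossSection G J₀) : (U ⊔ V).1 = U.1 ∪ V.1 := rfl

@[simp] theorem inf_val (U V : CrossSection G J₀) : (U ⊓ V).1 = meetFinset G J₀ U.1 V.1 := rfl

end CrossSection

/-!
The meet of `U` and `V` is the largest admissible subset of `U ∩ V`, so it suffices to show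
that a vertex `α ∈ U ∩ V` lies in some admissible subset of `U ∩ V` exactly when its component
in `U ∩ V` leaves `J₀`. One direction is immediate, since reachability is monotone in the
vertex set; for the other, that component is itself admissible, because every vertex of it can
walk back to `α` and on to the vertex outside `J₀`.
-/

section

variable {n : ℕ} {G : SimpleGraph (Fin n)} {S : Finset (Fin n)} {a b : Fin n}

theorem ReachIn.symm (h : ReachIn G S a b) : ReachIn G S b a := by
  induction h with
  | refl => exact .refl
  | tail _ hxy ih => exact ih.head ⟨hxy.1.symm, hxy.2.2, hxy.2.1⟩

open Classical in
noncomputable def componentIn (G : SimpleGraph (Fin n)) (S : Finset (Fin n)) (a : Fin n) :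
    Finset (Fin n) :=
  {x ∈ S | ReachIn G S a x}

theorem componentIn_subset : componentIn G S a ⊆ S := by
  classical
  exact filter_subset _ _

theorem mem_componentIn_self (ha : a ∈ S) : a ∈ componentIn G S a := by
  classical
  exact mem_filter.mpr ⟨ha, .refl⟩

theorem ReachIn.to_componentIn (h : ReachIn G S a b) : ReachIn G (componentIn G S a) a b := by
  classical
  induction h with
  | refl => exact .refl
  | tail hax hxy ih =>
    exact ih.tail ⟨hxy.1, mem_filter.mpr ⟨hxy.2.1, hax⟩, mem_filter.mpr ⟨hxy.2.2, hax.tail hxy⟩⟩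

theorem admissible_componentIn {J₀ : Finset (Fin n)} (hab : ReachIn G S a b) (hb : b ∉ J₀) :
    Admissible G J₀ (componentIn G S a) := by
  classical
  intro x hx
  have hax : ReachIn G S a x := (mem_filter.mp hx).2
  exact ⟨b, hax.to_componentIn.symm.trans hab.to_componentIn, hb⟩

theorem CrossSection.mem_meetFinset_iff (J₀ U V : Finset (Fin n)) (α : Fin n) :
    α ∈ meetFinset G J₀ U V ↔ α ∈ U ∩ V ∧ ∃ b, ReachIn G (U ∩ V) α b ∧ b ∉ J₀ := by
  have hsub : meetFinset G J₀ U V ⊆ U ∩ V :=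
    subset_inter (meetFinset_subset_left G J₀ U V) (meetFinset_subset_right G J₀ U V)
  constructor
  · intro hα
    obtain ⟨b, hαb, hb⟩ := admissible_meetFinset G J₀ U V α hα
    exact ⟨hsub hα, b, hαb.mono hsub, hb⟩
  · rintro ⟨hα, b, hαb, hb⟩
    have hcomp : componentIn G (U ∩ V) α ⊆ meetFinset G J₀ U V :=
      subset_meetFinset (admissible_componentIn hαb hb)
        (componentIn_subset.trans inter_subset_left) (componentIn_subset.trans inter_subset_right)
    exact hcomp (mem_componentIn_self hα)

end

theorem stmt_0_general (n : ℕ) (J₀ : Finset (Fin n))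
    (U V : CrossSection (pathGraph n) J₀) (α : Fin n) :
    α ∈ (U ⊓ V).1 ↔
      α ∈ U.1 ∩ V.1 ∧ ∃ b, ReachIn (pathGraph n) (U.1 ∩ V.1) α b ∧ b ∉ J₀ :=
  CrossSection.mem_meetFinset_iff J₀ U.1 V.1 α

theorem stmt_0 (n : ℕ) (hn : 1 ≤ n) (J₀ : Finset (Fin n))
    (U V : CrossSection (pathGraph n) J₀) (α : Fin n) :
    α ∈ (U ⊓ V).1 ↔
      α ∈ U.1 ∩ V.1 ∧ ∃ b, ReachIn (pathGraph n) (U.1 ∩ V.1) α b ∧ b ∉ J₀ :=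
  stmt_0_general n J₀ U V α
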